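/- Let F be a field of characteristic p. Define the Artin–Schreier–Kato operator ℘ on Ω^n_F by sending a·(db_1/b_1)∧...∧(db_n/b_n) to (a^p − a)·(db_1/b_1)∧...∧(db_n/b_n) (extended additively). Then ℘ is a well-defined additive group homomorphism from the subgroup of Ω^n_F generated by such logarithmic forms to Ω^n_F / dΩ^{n-1}_F. -/

import Mathlib

set_option synthInstance.maxHeartbeats 400000
set_option maxHeartbeats 1000000

/-- The additive subgroup generated by logarithmic `n`-forms
`a·(db₁/b₁) ∧ ⋯ ∧ (db_n/b_n)` with `a ∈ F`, `bᵢ ∈ F^*`. -/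
noncomputable def logForms (F : Type) [Field F] (n : ℕ) :
    AddSubgroup (ExteriorAlgebra F (KaehlerDifferential ℤ F)) :=
  AddSubgroup.closure
    {x | ∃ (a : F) (b : Fin n → F), (∀ i, b i ≠ 0) ∧
      x = a • ExteriorAlgebra.ιMulti F n fun i => (b i)⁻¹ • KaehlerDifferential.D ℤ F (b i)}

/-- The additive subgroup of `n`-forms `b·dc₁ ∧ ⋯ ∧ dc_n`. -/
noncomputable def nForms (F : Type) [Field F] (n : ℕ) :
    AddSubgroup (ExteriorAlgebra F (KaehlerDifferential ℤ F)) :=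
  AddSubgroup.closure
    {x | ∃ (b : F) (c : Fin n → F),
      x = b • ExteriorAlgebra.ιMulti F n fun i => KaehlerDifferential.D ℤ F (c i)}

/-- An additive endomorphism of the exterior algebra of `Ω¹_F` is an exterior derivative if it
sends `b·dc₁ ∧ ⋯ ∧ dc_m` to `db ∧ dc₁ ∧ ⋯ ∧ dc_m` for all `m`. -/
def IsExtDer (F : Type) [Field F]
    (d : ExteriorAlgebra F (KaehlerDifferential ℤ F) →+
         ExteriorAlgebra F (KaehlerDifferential ℤ F)) : Prop :=
  ∀ (m : ℕ) (b : F) (c : Fin m → F),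
    d (b • ExteriorAlgebra.ιMulti F m fun i => KaehlerDifferential.D ℤ F (c i)) =
      ExteriorAlgebra.ιMulti F (m + 1)
        (Fin.cons (KaehlerDifferential.D ℤ F b) fun i => KaehlerDifferential.D ℤ F (c i))

/-!
Choose a basis of `Ω¹_F` made of differentials `dα_k` and let `γ` be the Frobenius-semilinear
map with `γ (dα_k) = α_k ^ (p - 1) dα_k`. Since `a ↦ a ^ (p - 1) da` is additive and satisfies
the Leibniz rule modulo exact forms, `γ` agrees with the inverse Cartier operator modulo exact
forms; in particular `γ (db / b) ≡ db / b`. The values of `γ` and the forms `db / b` are sums of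
closed forms `c dw` with `dc ∈ F dw`, and a wedge of such forms with one exact form is a sum of
wedges of exact forms, all of which lie in `dΩ^{n-1}`. Hence the additive map `x ↦ Λⁿγ (x) - x`
sends `a · ⋀ db_i / b_i` to `a ^ p · ⋀ γ (db_i / b_i) - a · ⋀ db_i / b_i`, which is congruent to
`(a ^ p - a) · ⋀ db_i / b_i`.
-/

open ExteriorAlgebra

/-- `M` with `F` acting through Frobenius: `c • x` is `c ^ p • x` computed in `M`. -/
def FrobeniusTwist (_F : Type*) (_p : ℕ) (M : Type*) : Type _ := M

namespace FrobeniusTwist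

variable {F : Type*} {p : ℕ} {M : Type*} [CommRing F] [ExpChar F p] [AddCommGroup M] [Module F M]

instance : AddCommGroup (FrobeniusTwist F p M) := ‹AddCommGroup M›

instance : Module F (FrobeniusTwist F p M) := Module.compHom M (frobenius F p)

def of : M ≃+ FrobeniusTwist F p M := AddEquiv.refl M

theorem smul_of (c : F) (x : M) : c • (of x : FrobeniusTwist F p M) = of (c ^ p • x) := rfl

theorem of_symm_smul (c : F) (x : FrobeniusTwist F p M) : of.symm (c • x) = c ^ p • of.symm x :=
  rfl

instance : IsScalarTower ℤ F (FrobeniusTwist F p M) where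
  smul_assoc z c x := by
    obtain ⟨x, rfl⟩ := of.surjective x
    rw [smul_of, smul_of, ← map_zsmul, zsmul_eq_mul, mul_pow, ← frobenius_def p (z : F),
      map_intCast, mul_smul, Int.cast_smul_eq_zsmul]

end FrobeniusTwist

open FrobeniusTwist

def AlternatingMap.frobeniusTwist {F : Type*} {p : ℕ} [CommRing F] [ExpChar F p]
    {M N ι : Type*} [AddCommGroup M] [Module F M] [AddCommGroup N] [Module F N]
    (f : M [⋀^ι]→ₗ[F] N) : FrobeniusTwist F p M [⋀^ι]→ₗ[F] FrobeniusTwist F p N where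
  toFun v := of (f (of.symm ∘ v))
  map_update_add' v i x y := f.map_update_add v i x y
  map_update_smul' v i c x := f.map_update_smul v i (c ^ p) x
  map_eq_zero_of_eq' _ _ _ h hij := f.map_eq_zero_of_eq _ h hij

namespace ExteriorAlgebra

variable {F : Type*} {p : ℕ} [CommRing F] [ExpChar F p] {M : Type*} [AddCommGroup M] [Module F M]

noncomputable def mapFrobeniusTwist (γ : M →ₗ[F] FrobeniusTwist F p M) :
    ExteriorAlgebra F M →ₗ[F] FrobeniusTwist F p (ExteriorAlgebra F M) :=
  liftAlternating fun n => (ιMulti (M := M) F n).frobeniusTwist.compLinearMap γ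

theorem mapFrobeniusTwist_ιMulti (γ : M →ₗ[F] FrobeniusTwist F p M) {n : ℕ} (v : Fin n → M) :
    mapFrobeniusTwist γ (ιMulti F n v) = of (ιMulti F n fun i => of.symm (γ (v i))) :=
  liftAlternating_apply_ιMulti _ v

end ExteriorAlgebra

namespace Derivation

variable {R A M : Type*} [CommRing R] [CommRing A] [Algebra R A] [AddCommGroup M] [Module A M]
  [Module R M] (D : Derivation R A M)

theorem map_pow_char (p : ℕ) [CharP A p] (a : A) : D (a ^ p) = 0 := by
  rw [leibniz_pow, ← Nat.cast_smul_eq_nsmul A, CharP.cast_eq_zero, zero_smul]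

theorem map_pow_char_mul (p : ℕ) [CharP A p] (a b : A) : D (a ^ p * b) = a ^ p • D b := by
  rw [leibniz, map_pow_char, smul_zero, add_zero]

theorem add_pow_pred_smul_sub_mem_range {p : ℕ} (hp : p.Prime) (a b : A) :
    (a + b) ^ (p - 1) • D (a + b) - a ^ (p - 1) • D a - b ^ (p - 1) • D b ∈ Set.range D := by
  obtain ⟨q, rfl⟩ : ∃ q, p = q + 1 := ⟨p - 1, (Nat.sub_add_cancel hp.one_le).symm⟩
  -- `k i = binom(p, i + 1) / p`, so the witness is `((a + b) ^ p - a ^ p - b ^ p) / p`.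
  set k : ℕ → ℕ := fun i => (q + 1).choose (i + 1) / (q + 1)
  have hk : ∀ i < q, k i * (i + 1) = q.choose i ∧ k i * (q - i) = q.choose (i + 1) := by
    intro i hi
    have hdvd := hp.dvd_choose_self i.succ_ne_zero (by omega)
    refine ⟨?_, ?_⟩ <;> rw [Nat.div_mul_right_comm hdvd]
    · rw [← Nat.add_one_mul_choose_eq, Nat.mul_div_cancel_left _ hp.pos]
    · rw [show q - i = q + 1 - (i + 1) by omega, ← Nat.choose_mul_succ_eq,
        Nat.mul_div_cancel _ hp.pos]
  refine ⟨∑ i ∈ Finset.range q, k i • (a ^ (i + 1) * b ^ (q - i)), ?_⟩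
  have hterm : ∀ i ∈ Finset.range q, D (k i • (a ^ (i + 1) * b ^ (q - i))) =
      (q.choose i * (a ^ i * b ^ (q - i))) • D a +
        (q.choose (i + 1) * (a ^ (i + 1) * b ^ (q - (i + 1)))) • D b := by
    intro i hi
    obtain ⟨h1, h2⟩ := hk i (Finset.mem_range.1 hi)
    rw [map_nsmul, leibniz, leibniz_pow, leibniz_pow, ← h1, ← h2, Nat.add_sub_cancel,
      show q - i - 1 = q - (i + 1) by omega]
    push_cast
    match_scalars <;> ring
  have hsum_a : ∑ i ∈ Finset.range q, (q.choose i : A) * (a ^ i * b ^ (q - i)) =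
      (a + b) ^ q - a ^ q := by
    rw [add_pow, Finset.sum_range_succ, Nat.sub_self, pow_zero, Nat.choose_self]
    simp only [Nat.cast_one, mul_one, add_sub_cancel_right]
    exact Finset.sum_congr rfl fun i _ => by ring
  have hsum_b : ∑ i ∈ Finset.range q, (q.choose (i + 1) : A) * (a ^ (i + 1) * b ^ (q - (i + 1))) =
      (a + b) ^ q - b ^ q := by
    rw [add_pow, Finset.sum_range_succ', pow_zero, Nat.choose_zero_right]
    simp only [Nat.cast_one, one_mul, Nat.sub_zero, mul_one, add_sub_cancel_right]
    exact Finset.sum_congr rfl fun i _ => by ring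
  rw [map_sum, Finset.sum_congr rfl hterm, Finset.sum_add_distrib, ← Finset.sum_smul,
    ← Finset.sum_smul, hsum_a, hsum_b, Nat.add_sub_cancel, map_add]
  module

end Derivation

section ExactWedges

variable (R A : Type*) [CommRing R] [CommRing A] [Algebra R A]

open KaehlerDifferential

noncomputable def closedMonomialForms : AddSubgroup Ω[A⁄R] :=
  AddSubgroup.closure {ω | ∃ c w e : A, D R A c = e • D R A w ∧ ω = c • D R A w}

noncomputable def exactWedges (n : ℕ) : AddSubgroup (ExteriorAlgebra A Ω[A⁄R]) :=
  AddSubgroup.closure (Set.range fun g : Fin n → A => ιMulti A n fun i => D R A (g i))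

variable {R A}

theorem D_mem_closedMonomialForms (g : A) : D R A g ∈ closedMonomialForms R A :=
  AddSubgroup.subset_closure
    ⟨1, g, 0, by rw [Derivation.map_one_eq_zero, zero_smul], by rw [one_smul]⟩

theorem inv_smul_D_mem_closedMonomialForms {K : Type*} [Field K] [Algebra R K] (b : K) :
    b⁻¹ • D R K b ∈ closedMonomialForms R K :=
  AddSubgroup.subset_closure ⟨b⁻¹, b, -b⁻¹ ^ 2, Derivation.leibniz_inv _ b, rfl⟩

theorem pow_char_mul_pow_pred_smul_D_mem_closedMonomialForms (p : ℕ) [CharP A p] (u w : A) :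
    (u ^ p * w ^ (p - 1)) • D R A w ∈ closedMonomialForms R A :=
  AddSubgroup.subset_closure ⟨_, w, u ^ p * ((p - 1 : ℕ) * w ^ (p - 1 - 1)),
    by rw [Derivation.map_pow_char_mul, Derivation.leibniz_pow, ← Nat.cast_smul_eq_nsmul A,
      smul_smul, smul_smul, mul_assoc], rfl⟩

theorem ι_D_mul_mem_exactWedges (k : A) {n : ℕ} {x : ExteriorAlgebra A Ω[A⁄R]}
    (hx : x ∈ exactWedges R A n) : ι A (D R A k) * x ∈ exactWedges R A (n + 1) := by
  induction hx using AddSubgroup.closure_induction with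
  | mem _ hy =>
    obtain ⟨g, rfl⟩ := hy
    exact AddSubgroup.subset_closure ⟨Fin.cons k g, by simp [Matrix.vecTail, Function.comp_def]⟩
  | zero => rw [mul_zero]; exact zero_mem _
  | add _ _ _ _ hy hz => rw [mul_add]; exact add_mem hy hz
  | neg _ _ hy => rw [mul_neg]; exact neg_mem hy

theorem smul_mem_exactWedges {c : A} (hc : D R A c = 0) {n : ℕ} {x : ExteriorAlgebra A Ω[A⁄R]}
    (hx : x ∈ exactWedges R A (n + 1)) : c • x ∈ exactWedges R A (n + 1) := by
  induction hx using AddSubgroup.closure_induction with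
  | mem _ hy =>
    obtain ⟨g, rfl⟩ := hy
    change c • ιMulti A (n + 1) (fun i => D R A (g i)) ∈ _
    have hcg : c • D R A (g 0) = D R A (c * g 0) := by
      rw [Derivation.leibniz, hc, smul_zero, add_zero]
    rw [ιMulti_succ_apply, ← smul_mul_assoc, ← map_smul, hcg]
    exact ι_D_mul_mem_exactWedges _ (AddSubgroup.subset_closure ⟨Fin.tail g, rfl⟩)
  | zero => rw [smul_zero]; exact zero_mem _
  | add _ _ _ _ hy hz => rw [smul_add]; exact add_mem hy hz
  | neg _ _ hy => rw [smul_neg]; exact neg_mem hy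

theorem ι_D_mul_ι_smul_D {c w e : A} (hc : D R A c = e • D R A w) (h : A) :
    ι A (D R A h) * ι A (c • D R A w) = ι A (D R A (c * h)) * ι A (D R A w) := by
  rw [Derivation.leibniz, hc, smul_smul, map_add, map_smul, map_smul, map_smul, add_mul,
    smul_mul_assoc, smul_mul_assoc, ι_sq_zero, smul_zero, add_zero, mul_smul_comm]

theorem ι_D_mul_ιMulti_mem_exactWedges {n : ℕ} (h : A) {v : Fin n → Ω[A⁄R]}
    (hv : ∀ i, v i ∈ closedMonomialForms R A) :
    ι A (D R A h) * ιMulti A n v ∈ exactWedges R A (n + 1) := by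
  induction n generalizing h with
  | zero => exact AddSubgroup.subset_closure ⟨fun _ => h, by simp⟩
  | succ n ih =>
    rw [ιMulti_succ_apply, ← mul_assoc]
    suffices ∀ ω ∈ closedMonomialForms R A,
        ι A (D R A h) * ι A ω * ιMulti A n (Matrix.vecTail v) ∈ exactWedges R A (n + 2) from
      this _ (hv 0)
    intro ω hω
    induction hω using AddSubgroup.closure_induction with
    | mem _ hω =>
      obtain ⟨c, w, e, hc, rfl⟩ := hω
      rw [ι_D_mul_ι_smul_D hc, mul_assoc]
      exact ι_D_mul_mem_exactWedges _ (ih w fun i => hv i.succ)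
    | zero => rw [map_zero, mul_zero, zero_mul]; exact zero_mem _
    | add _ _ _ _ hx hy => rw [map_add, mul_add, add_mul]; exact add_mem hx hy
    | neg _ _ hx => rw [map_neg, mul_neg, neg_mul]; exact neg_mem hx

theorem ι_mul_mem_exactWedges {ω : Ω[A⁄R]} (hω : ω ∈ closedMonomialForms R A) {n : ℕ}
    {x : ExteriorAlgebra A Ω[A⁄R]} (hx : x ∈ exactWedges R A (n + 1)) :
    ι A ω * x ∈ exactWedges R A (n + 2) := by
  induction hx using AddSubgroup.closure_induction with
  | mem _ hy =>
    obtain ⟨g, rfl⟩ := hy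
    have hv : ∀ i, Matrix.vecCons ω (fun i => D R A (g i.succ)) i ∈ closedMonomialForms R A :=
      Fin.cases hω fun i => D_mem_closedMonomialForms _
    have hswap : ι A ω * ιMulti A (n + 1) (fun i => D R A (g i)) =
        -(ι A (D R A (g 0)) * ιMulti A (n + 1) (Matrix.vecCons ω fun i => D R A (g i.succ))) := by
      simp only [ιMulti_succ_apply, Matrix.cons_val_zero, Matrix.tail_cons]
      rw [← mul_assoc, ← mul_assoc, ← neg_mul, eq_neg_of_add_eq_zero_left (ι_add_mul_swap _ _)]
      rfl
    rw [hswap]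
    exact neg_mem (ι_D_mul_ιMulti_mem_exactWedges (g 0) hv)
  | zero => rw [mul_zero]; exact zero_mem _
  | add _ _ _ _ hy hz => rw [mul_add]; exact add_mem hy hz
  | neg _ _ hy => rw [mul_neg]; exact neg_mem hy

theorem ιMulti_succ_sub_ιMulti_succ {n : ℕ} (w w' : Fin (n + 1) → Ω[A⁄R]) :
    ιMulti A (n + 1) w - ιMulti A (n + 1) w' =
      ι A (w 0 - w' 0) * ιMulti A n (Matrix.vecTail w) +
        ι A (w' 0) * (ιMulti A n (Matrix.vecTail w) - ιMulti A n (Matrix.vecTail w')) := by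
  rw [ιMulti_succ_apply, ιMulti_succ_apply, map_sub, sub_mul, mul_sub, sub_add_sub_cancel]

theorem ιMulti_sub_ιMulti_mem_exactWedges {n : ℕ} {w w' : Fin (n + 1) → Ω[A⁄R]}
    (hw : ∀ i, w i ∈ closedMonomialForms R A) (hw' : ∀ i, w' i ∈ closedMonomialForms R A)
    (hexact : ∀ i, w i - w' i ∈ Set.range (D R A)) :
    ιMulti A (n + 1) w - ιMulti A (n + 1) w' ∈ exactWedges R A (n + 1) := by
  rw [ιMulti_succ_sub_ιMulti_succ]
  obtain ⟨g, hg⟩ := hexact 0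
  refine add_mem (hg ▸ ι_D_mul_ιMulti_mem_exactWedges g fun i => hw i.succ) ?_
  cases n with
  | zero => rw [ιMulti_zero_apply, ιMulti_zero_apply, sub_self, mul_zero]; exact zero_mem _
  | succ n =>
    exact ι_mul_mem_exactWedges (hw' 0) (ιMulti_sub_ιMulti_mem_exactWedges
      (fun i => hw i.succ) (fun i => hw' i.succ) fun i => hexact i.succ)

end ExactWedges

theorem inv_pow_mul_pow_sub_one {K : Type*} [CommGroupWithZero K] {n : ℕ} (hn : n ≠ 0) (b : K) :
    b⁻¹ ^ n * b ^ (n - 1) = b⁻¹ := by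
  obtain ⟨m, rfl⟩ := Nat.exists_eq_succ_of_ne_zero hn
  rw [pow_succ', Nat.succ_sub_one, mul_assoc, ← mul_pow]
  rcases eq_or_ne b 0 with rfl | hb
  · rw [inv_zero, zero_mul]
  · rw [inv_mul_cancel₀ hb, one_pow, mul_one]

section Cartier

variable (p : ℕ) [Fact p.Prime]

open KaehlerDifferential

section CommRing

variable (A : Type*) [CommRing A] [CharP A p]

def exactForms : Submodule A (FrobeniusTwist A p Ω[A⁄ℤ]) where
  carrier := {x | of.symm x ∈ Set.range (D ℤ A)}
  add_mem' := by
    rintro x y ⟨g, hg⟩ ⟨h, hh⟩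
    exact ⟨g + h, by rw [map_add, map_add, hg, hh]⟩
  zero_mem' := ⟨0, by rw [map_zero, map_zero]⟩
  smul_mem' := by
    rintro c x ⟨g, hg⟩
    exact ⟨c ^ p * g, by rw [(D ℤ A).map_pow_char_mul p, hg, of_symm_smul]⟩

theorem mem_exactForms {x : FrobeniusTwist A p Ω[A⁄ℤ]} :
    x ∈ exactForms p A ↔ of.symm x ∈ Set.range (D ℤ A) :=
  Iff.rfl

/-- `a ↦ a ^ (p - 1) da` modulo exact forms; its linear extension to `Ω¹` is the inverse Cartier
operator. -/
noncomputable def cartierDerivation :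
    Derivation ℤ A (FrobeniusTwist A p Ω[A⁄ℤ] ⧸ exactForms p A) :=
  Derivation.mk'
    (AddMonoidHom.mk' (fun a => (exactForms p A).mkQ (of (a ^ (p - 1) • D ℤ A a))) fun a b => by
      rw [← map_add, ← map_add, ← sub_eq_zero, ← map_sub, ← map_sub, Submodule.mkQ_apply,
        Submodule.Quotient.mk_eq_zero, mem_exactForms, AddEquiv.symm_apply_apply, ← sub_sub]
      exact (D ℤ A).add_pow_pred_smul_sub_mem_range Fact.out a b).toIntLinearMap
    fun a b => by
      obtain ⟨q, rfl⟩ : ∃ q, p = q + 1 :=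
        ⟨p - 1, (Nat.sub_add_cancel (Fact.out : p.Prime).one_le).symm⟩
      simp only [AddMonoidHom.coe_toIntLinearMap, AddMonoidHom.mk'_apply, ← LinearMap.map_smul,
        smul_of, ← map_add, Nat.add_sub_cancel]
      congr 2
      rw [Derivation.leibniz]
      match_scalars <;> ring

theorem cartierDerivation_apply (a : A) :
    cartierDerivation p A a = (exactForms p A).mkQ (of (a ^ (p - 1) • D ℤ A a)) :=
  rfl

end CommRing

variable (F : Type*) [Field F] [CharP F p]

theorem liftKaehlerDifferential_cartierDerivation_inv_smul_D (b : F) :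
    (cartierDerivation p F).liftKaehlerDifferential (b⁻¹ • D ℤ F b) =
      (exactForms p F).mkQ (of (b⁻¹ • D ℤ F b)) := by
  rw [LinearMap.map_smul, Derivation.liftKaehlerDifferential_comp_D, cartierDerivation_apply,
    ← LinearMap.map_smul, smul_of, smul_smul,
    inv_pow_mul_pow_sub_one (Fact.out : p.Prime).ne_zero]

theorem exists_linearMap_mkQ_comp_eq_liftKaehlerDifferential :
    ∃ γ : Ω[F⁄ℤ] →ₗ[F] FrobeniusTwist F p Ω[F⁄ℤ],
      (∀ ω, of.symm (γ ω) ∈ closedMonomialForms ℤ F) ∧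
        (exactForms p F).mkQ ∘ₗ γ = (cartierDerivation p F).liftKaehlerDifferential := by
  have hspan := (span_range_derivation ℤ F).ge
  choose α hα using fun k => Module.Basis.ofSpan_subset hspan ⟨k, rfl⟩
  refine ⟨(Module.Basis.ofSpan hspan).constr F fun k => of (α k ^ (p - 1) • D ℤ F (α k)),
    fun ω => ?_, (Module.Basis.ofSpan hspan).ext fun k => ?_⟩
  · rw [Module.Basis.constr_apply, map_finsuppSum]
    refine AddSubgroup.sum_mem _ fun k _ => ?_
    simp only [of_symm_smul, AddEquiv.symm_apply_apply, smul_smul]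
    exact pow_char_mul_pow_pred_smul_D_mem_closedMonomialForms p _ _
  · rw [LinearMap.comp_apply, Module.Basis.constr_basis, ← hα,
      Derivation.liftKaehlerDifferential_comp_D, cartierDerivation_apply]

theorem exists_cartierInverse :
    ∃ γ : Ω[F⁄ℤ] →ₗ[F] FrobeniusTwist F p Ω[F⁄ℤ],
      (∀ ω, of.symm (γ ω) ∈ closedMonomialForms ℤ F) ∧
        ∀ b : F, of.symm (γ (b⁻¹ • D ℤ F b)) - b⁻¹ • D ℤ F b ∈ Set.range (D ℤ F) := by
  obtain ⟨γ, hγ, hγ_lift⟩ := exists_linearMap_mkQ_comp_eq_liftKaehlerDifferential p F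
  refine ⟨γ, hγ, fun b => ?_⟩
  have := LinearMap.congr_fun hγ_lift (b⁻¹ • D ℤ F b)
  rwa [LinearMap.comp_apply, liftKaehlerDifferential_cartierDerivation_inv_smul_D,
    Submodule.mkQ_apply, Submodule.mkQ_apply, Submodule.Quotient.eq, mem_exactForms,
    map_sub, AddEquiv.symm_apply_apply] at this

end Cartier

theorem exactWedges_le_map_nForms {F : Type} [Field F]
    {d : ExteriorAlgebra F Ω[F⁄ℤ] →+ ExteriorAlgebra F Ω[F⁄ℤ]} (hd : IsExtDer F d) (n : ℕ) :
    exactWedges ℤ F (n + 1) ≤ (nForms F n).map d := by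
  refine (AddSubgroup.closure_le _).2 <| Set.range_subset_iff.2 fun g =>
    ⟨_, AddSubgroup.subset_closure ⟨g 0, Fin.tail g, rfl⟩, ?_⟩
  rw [hd]
  exact congrArg _ (Fin.cons_self_tail fun i => KaehlerDifferential.D ℤ F (g i))

theorem pow_char_smul_ιMulti_sub_ιMulti_mem_map_nForms (p : ℕ) {F : Type} [Field F] [CharP F p]
    {d : ExteriorAlgebra F Ω[F⁄ℤ] →+ ExteriorAlgebra F Ω[F⁄ℤ]} (hd : IsExtDer F d) {n : ℕ}
    (a : F) {w w' : Fin n → Ω[F⁄ℤ]} (hw : ∀ i, w i ∈ closedMonomialForms ℤ F)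
    (hw' : ∀ i, w' i ∈ closedMonomialForms ℤ F)
    (hexact : ∀ i, w i - w' i ∈ Set.range (KaehlerDifferential.D ℤ F)) :
    a ^ p • (ιMulti F n w - ιMulti F n w') ∈ (nForms F (n - 1)).map d := by
  cases n with
  | zero => rw [ιMulti_zero_apply, ιMulti_zero_apply, sub_self, smul_zero]; exact zero_mem _
  | succ n =>
    exact exactWedges_le_map_nForms hd n <| smul_mem_exactWedges
      ((KaehlerDifferential.D ℤ F).map_pow_char p a)
      (ιMulti_sub_ιMulti_mem_exactWedges hw hw' hexact)

/-- Let `F` be a field of characteristic `p`.  The Artin–Schreier–Kato operator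
`℘`, sending `a·(db₁/b₁)∧⋯∧(db_n/b_n)` to `(a^p − a)·(db₁/b₁)∧⋯∧(db_n/b_n)` and extended
additively, is a well-defined additive group homomorphism from the subgroup of `Ω^n_F`
generated by logarithmic forms to `Ω^n_F / dΩ^{n-1}_F`. -/
theorem artin_schreier_kato_well_defined
    (p : ℕ) [Fact p.Prime] (F : Type) [Field F] [CharP F p] (n : ℕ)
    (d : ExteriorAlgebra F (KaehlerDifferential ℤ F) →+
         ExteriorAlgebra F (KaehlerDifferential ℤ F))
    (hd : IsExtDer F d) :
    ∃ P : ↥(logForms F n) →+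
        (ExteriorAlgebra F (KaehlerDifferential ℤ F) ⧸
          AddSubgroup.map d (nForms F (n - 1))),
      ∀ (a : F) (b : Fin n → F) (hb : ∀ i, b i ≠ 0)
        (hmem : a • ExteriorAlgebra.ιMulti F n
            (fun i => (b i)⁻¹ • KaehlerDifferential.D ℤ F (b i)) ∈ logForms F n),
        P ⟨_, hmem⟩ = QuotientAddGroup.mk
          ((a ^ p - a) • ExteriorAlgebra.ιMulti F n
            fun i => (b i)⁻¹ • KaehlerDifferential.D ℤ F (b i)) := by
  obtain ⟨γ, hγ, hγ_dlog⟩ := exists_cartierInverse p F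
  let Ψ : ExteriorAlgebra F Ω[F⁄ℤ] →+ ExteriorAlgebra F Ω[F⁄ℤ] :=
    of.symm.toAddMonoidHom.comp (mapFrobeniusTwist γ).toAddMonoidHom
  refine ⟨(QuotientAddGroup.mk' _).comp ((Ψ - .id _).comp (logForms F n).subtype),
    fun a b _ hmem => ?_⟩
  set dlog : Fin n → Ω[F⁄ℤ] := fun i => (b i)⁻¹ • KaehlerDifferential.D ℤ F (b i)
  have hΨ : Ψ (a • ιMulti F n dlog) = a ^ p • ιMulti F n fun i => of.symm (γ (dlog i)) := by
    simp only [Ψ, AddMonoidHom.comp_apply, LinearMap.toAddMonoidHom_coe, map_smul,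
      mapFrobeniusTwist_ιMulti, AddEquiv.coe_toAddMonoidHom, of_symm_smul,
      AddEquiv.symm_apply_apply]
  change QuotientAddGroup.mk (Ψ (a • ιMulti F n dlog) - a • ιMulti F n dlog) =
    QuotientAddGroup.mk ((a ^ p - a) • ιMulti F n dlog)
  rw [QuotientAddGroup.eq_iff_sub_mem, hΨ]
  convert pow_char_smul_ιMulti_sub_ιMulti_mem_map_nForms p hd a (fun i => hγ (dlog i))
    (fun i => inv_smul_D_mem_closedMonomialForms (b i)) (fun i => hγ_dlog (b i)) using 1
  module
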